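/- Define x = (x_n)_{n≥0} ∈ {0,1,2}^ℕ by x_n = r (for r ∈ {0,1,2}) whenever 3^{3k+r} ≤ n+1 < 3^{3k+r+1} for some k ≥ 0 (so x = 00 111111 2^{18} 0^{54} … in blocks of tripling lengths). Then, for the left shift S on {0,1,2}^ℕ: V^log(x) = {(1/3)·δ_{0̄} + (1/3)·δ_{1̄} + (1/3)·δ_{2̄}} and V(x) ∩ V^log(x) = ∅. -/

import Mathlib

open MeasureTheory Filter Topology
open scoped ENNReal NNReal Classical

section EmpiricalMeasures

variable {X : Type*} [MeasurableSpace X]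

/-- The empirical (Cesàro) measure `E(x, N+1) = (1/(N+1)) ∑_{n=1}^{N+1} δ_{T^{n-1} x}`
(indexed so that `cesaroEmp T x N` has `N + 1` point masses). -/
noncomputable def cesaroEmp (T : X → X) (x : X) (N : ℕ) : ProbabilityMeasure X :=
  ⟨((N + 1 : ℝ≥0∞))⁻¹ • ∑ n ∈ Finset.range (N + 1), Measure.dirac (T^[n] x), by
    constructor
    simp [Measure.smul_apply, Measure.finset_sum_apply, Finset.sum_const,
      ENNReal.inv_mul_cancel, Nat.cast_add_one_ne_zero]⟩

/-- The harmonic sum `H_{N+1} = ∑_{n=1}^{N+1} 1/n`, as an element of `ℝ≥0∞`. -/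
noncomputable def harmonicSum (N : ℕ) : ℝ≥0∞ :=
  ∑ n ∈ Finset.range (N + 1), ((n : ℝ≥0∞) + 1)⁻¹

/-- The logarithmic (harmonic) empirical measure
`E^log(x, N+1) = (1/H_{N+1}) ∑_{n=1}^{N+1} (1/n) δ_{T^{n-1} x}`
(indexed so that `logEmp T x N` has `N + 1` point masses). -/
noncomputable def logEmp (T : X → X) (x : X) (N : ℕ) : ProbabilityMeasure X :=
  ⟨(harmonicSum N)⁻¹ • ∑ n ∈ Finset.range (N + 1),
      (((n : ℝ≥0∞) + 1)⁻¹ • Measure.dirac (T^[n] x)), by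
    constructor
    have h1 : (harmonicSum N) ≠ 0 := by
      intro h
      have hle : (((0 : ℕ) : ℝ≥0∞) + 1)⁻¹ ≤ harmonicSum N :=
        Finset.single_le_sum (f := fun n : ℕ => ((n : ℝ≥0∞) + 1)⁻¹)
          (fun i _ => zero_le) (Finset.mem_range.2 (Nat.succ_pos N))
      rw [h] at hle
      simp at hle
    have h2 : (harmonicSum N) ≠ ⊤ := by
      refine (ENNReal.sum_lt_top.2 fun n _ => ?_).ne
      simp [ENNReal.inv_lt_top]
    have key : ((harmonicSum N)⁻¹ • ∑ n ∈ Finset.range (N + 1),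
        (((n : ℝ≥0∞) + 1)⁻¹ • Measure.dirac (T^[n] x))) Set.univ
        = (harmonicSum N)⁻¹ * harmonicSum N := by
      simp [Measure.smul_apply, Measure.finset_sum_apply, harmonicSum]
    rw [key, ENNReal.inv_mul_cancel h1 h2]⟩

variable [TopologicalSpace X] [OpensMeasurableSpace X]

/-- The set of limit points (along strictly increasing subsequences) of a sequence. -/
def seqLimitPoints {α : Type*} [TopologicalSpace α] (u : ℕ → α) : Set α :=
  {p | ∃ φ : ℕ → ℕ, StrictMono φ ∧ Tendsto (u ∘ φ) atTop (𝓝 p)}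

/-- `V(x)`: the set of weak-* limit points of the empirical measures `(E(x,N))_{N ≥ 1}`. -/
noncomputable def cesaroLimitSet (T : X → X) (x : X) : Set (ProbabilityMeasure X) :=
  seqLimitPoints (fun N => cesaroEmp T x N)

/-- `V^log(x)`: the set of weak-* limit points of the logarithmic empirical measures
`(E^log(x,N))_{N ≥ 2}` (the set of limit points is unaffected by also allowing `N = 1`). -/
noncomputable def logLimitSet (T : X → X) (x : X) : Set (ProbabilityMeasure X) :=
  seqLimitPoints (fun N => logEmp T x N)

end EmpiricalMeasures

/-- The left shift on `{0,1,2}^ℕ`. -/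
def shift3 : (ℕ → Fin 3) → (ℕ → Fin 3) := fun y n => y (n + 1)

/-- The point `x = 00 111111 2^18 0^54 … ∈ {0,1,2}^ℕ`: `x_n = r` whenever
`3^(3k+r) ≤ n+1 < 3^(3k+r+1)` for some `k ≥ 0` (`r ∈ {0,1,2}`). -/
noncomputable def xTri : ℕ → Fin 3 := fun n =>
  if ∃ k : ℕ, 3 ^ (3 * k) ≤ n + 1 ∧ n + 1 < 3 ^ (3 * k + 1) then 0
  else if ∃ k : ℕ, 3 ^ (3 * k + 1) ≤ n + 1 ∧ n + 1 < 3 ^ (3 * k + 2) then 1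
  else 2

noncomputable def dig (n : ℕ) : Fin 3 := ⟨Nat.log 3 (n + 1) % 3, by omega⟩

lemma log_uniq {n a : ℕ} (h1 : 3 ^ a ≤ n + 1) (h2 : n + 1 < 3 ^ (a + 1)) :
    Nat.log 3 (n + 1) = a := Nat.log_eq_of_pow_le_of_lt_pow h1 h2

lemma cond_iff (n r : ℕ) (hr : r < 3) :
    (∃ k : ℕ, 3 ^ (3 * k + r) ≤ n + 1 ∧ n + 1 < 3 ^ (3 * k + r + 1)) ↔
      Nat.log 3 (n + 1) % 3 = r := by
  constructor
  · rintro ⟨k, h1, h2⟩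
    have := log_uniq h1 h2
    omega
  · intro h
    refine ⟨Nat.log 3 (n + 1) / 3, ?_⟩
    have h3 : 3 * (Nat.log 3 (n + 1) / 3) + r = Nat.log 3 (n + 1) := by omega
    rw [h3]
    exact ⟨Nat.pow_log_le_self 3 (by omega), Nat.lt_pow_succ_log_self (by norm_num) _⟩

lemma xTri_eq (n : ℕ) : xTri n = dig n := by
  unfold xTri dig
  have c0 := cond_iff n 0 (by norm_num)
  have c1 := cond_iff n 1 (by norm_num)
  split_ifs with h0 h1
  · simp only [Nat.add_zero, Nat.mul_comm] at c0 h0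
    have : Nat.log 3 (n + 1) % 3 = 0 := c0.1 (by convert h0 using 3 <;> omega)
    exact Fin.ext (by simp [this])
  · have : Nat.log 3 (n + 1) % 3 = 1 := c1.1 (by convert h1 using 3 <;> omega)
    exact Fin.ext (by simp [this])
  · have h2 : Nat.log 3 (n + 1) % 3 = 2 := by
      have n0 : ¬ Nat.log 3 (n + 1) % 3 = 0 := fun h => h0 (by
        obtain ⟨k, hk⟩ := c0.2 h
        exact ⟨k, by convert hk using 3 <;> omega⟩)
      have n1 : ¬ Nat.log 3 (n + 1) % 3 = 1 := fun h => h1 (by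
        obtain ⟨k, hk⟩ := c1.2 h
        exact ⟨k, by convert hk using 3 <;> omega⟩)
      omega
    exact Fin.ext (by simp [h2])
open Finset in
noncomputable def w (n : ℕ) : ℝ := ((n : ℝ) + 1)⁻¹

lemma w_pos (n : ℕ) : 0 < w n := by unfold w; positivity

lemma log_term_le (n : ℕ) : Real.log (n + 2) - Real.log (n + 1) ≤ w n := by
  have h : Real.log (((n : ℝ) + 2) / ((n : ℝ) + 1)) ≤ ((n : ℝ) + 2) / ((n : ℝ) + 1) - 1 :=
    Real.log_le_sub_one_of_pos (by positivity)
  rw [Real.log_div (by positivity) (by positivity)] at h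
  have h2 : ((n : ℝ) + 2) / ((n : ℝ) + 1) - 1 = w n := by
    unfold w; field_simp; norm_num
  linarith [h2 ▸ h]

lemma le_log_term (n : ℕ) (hn : 1 ≤ n) : w n ≤ Real.log (n + 1) - Real.log n := by
  have hn' : (1 : ℝ) ≤ (n : ℝ) := by exact_mod_cast hn
  have h : Real.log ((n : ℝ) / ((n : ℝ) + 1)) ≤ (n : ℝ) / ((n : ℝ) + 1) - 1 :=
    Real.log_le_sub_one_of_pos (by positivity)
  rw [Real.log_div (by positivity) (by positivity)] at h
  have h2 : (n : ℝ) / ((n : ℝ) + 1) - 1 = -w n := by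
    unfold w; field_simp; ring
  linarith [h2 ▸ h]

lemma sum_w_ge (a b : ℕ) (h : a ≤ b) :
    Real.log (b + 1) - Real.log (a + 1) ≤ ∑ n ∈ Finset.Ico a b, w n := by
  induction b, h using Nat.le_induction with
  | base => simp
  | succ b hb ih =>
    rw [Finset.sum_Ico_succ_top hb]
    have := log_term_le b
    push_cast
    push_cast at ih this
    ring_nf
    ring_nf at ih this
    linarith

lemma sum_w_le (a b : ℕ) (ha : 1 ≤ a) (h : a ≤ b) :
    ∑ n ∈ Finset.Ico a b, w n ≤ Real.log b - Real.log a := by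
  induction b, h using Nat.le_induction with
  | base => simp
  | succ b hb ih =>
    rw [Finset.sum_Ico_succ_top hb]
    have := le_log_term b (le_trans ha hb)
    push_cast
    push_cast at ih this
    ring_nf
    ring_nf at ih this
    linarith

lemma log3_le_two : Real.log 3 ≤ 2 := by
  have := Real.log_le_sub_one_of_pos (by norm_num : (0:ℝ) < 3)
  linarith

lemma log3_nonneg : 0 ≤ Real.log 3 := Real.log_nonneg (by norm_num)

lemma cast_pow_sub_one (m : ℕ) : ((3 ^ m - 1 : ℕ) : ℝ) = (3 : ℝ) ^ m - 1 := by
  have : 1 ≤ 3 ^ m := Nat.one_le_pow _ _ (by norm_num)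
  push_cast [Nat.cast_sub this]
  ring

lemma blocksum_lb (m : ℕ) :
    Real.log 3 ≤ ∑ n ∈ Finset.Ico (3 ^ m - 1) (3 ^ (m + 1) - 1), w n := by
  have hab : 3 ^ m - 1 ≤ 3 ^ (m + 1) - 1 :=
    Nat.sub_le_sub_right (Nat.pow_le_pow_right (by norm_num) (by omega)) 1
  have h := sum_w_ge _ _ hab
  rw [cast_pow_sub_one, cast_pow_sub_one] at h
  have e1 : (3 : ℝ) ^ (m + 1) - 1 + 1 = (3:ℝ) ^ (m+1) := by ring
  have e2 : (3 : ℝ) ^ m - 1 + 1 = (3:ℝ) ^ m := by ring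
  rw [e1, e2, Real.log_pow, Real.log_pow] at h
  have : ((m : ℝ) + 1) * Real.log 3 - (m : ℝ) * Real.log 3 = Real.log 3 := by ring
  push_cast at h
  linarith

lemma blocksum_ub (m : ℕ) :
    ∑ n ∈ Finset.Ico (3 ^ m - 1) (3 ^ (m + 1) - 1), w n ≤ Real.log 3 + 3 * ((3:ℝ) ^ m)⁻¹ := by
  rcases Nat.eq_zero_or_pos m with rfl | hm
  · norm_num [Finset.sum_Ico_eq_sum_range]
    rw [Finset.sum_range_succ, Finset.sum_range_one]
    unfold w
    norm_num
    linarith [log3_nonneg]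
  · have h1 : (1:ℕ) ≤ 3 ^ m - 1 := by
      have : (3:ℕ) ^ 1 ≤ 3 ^ m := Nat.pow_le_pow_right (by norm_num) hm
      simp at this
      omega
    have hab : 3 ^ m - 1 ≤ 3 ^ (m + 1) - 1 :=
      Nat.sub_le_sub_right (Nat.pow_le_pow_right (by norm_num) (by omega)) 1
    have h := sum_w_le _ _ h1 hab
    rw [cast_pow_sub_one, cast_pow_sub_one] at h
    have hA : (2:ℝ) ≤ (3:ℝ) ^ m := by
      calc (2:ℝ) ≤ 3 := by norm_num
      _ = (3:ℝ)^1 := by ring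
      _ ≤ (3:ℝ)^m := by
        apply pow_le_pow_right₀ (by norm_num) hm
    have hB : (3:ℝ)^(m+1) = 3 * (3:ℝ)^m := by ring
    -- log(3^{m+1} - 1) ≤ log(3^{m+1})
    have hmono : Real.log ((3:ℝ) ^ (m+1) - 1) ≤ Real.log ((3:ℝ) ^ (m+1)) :=
      Real.log_le_log (by nlinarith) (by nlinarith)
    -- log(3^m) - log(3^m - 1) ≤ 1/(3^m - 1) ≤ 3/3^m
    have hkey : Real.log ((3:ℝ) ^ m) - Real.log ((3:ℝ) ^ m - 1) ≤ 3 * ((3:ℝ)^m)⁻¹ := by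
      have hpos : (0:ℝ) < (3:ℝ)^m - 1 := by linarith
      have h3 : Real.log ((3:ℝ)^m / ((3:ℝ)^m - 1)) ≤ (3:ℝ)^m / ((3:ℝ)^m - 1) - 1 :=
        Real.log_le_sub_one_of_pos (by positivity)
      rw [Real.log_div (by positivity) (by linarith)] at h3
      have h4 : (3:ℝ)^m / ((3:ℝ)^m - 1) - 1 = ((3:ℝ)^m - 1)⁻¹ := by field_simp; ring
      have h5 : ((3:ℝ)^m - 1)⁻¹ ≤ 3 * ((3:ℝ)^m)⁻¹ := by
        have e : 3 * ((3:ℝ)^m)⁻¹ = 3 / ((3:ℝ)^m) := by ring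
        rw [← one_div, e, div_le_div_iff₀ hpos (by positivity)]
        nlinarith
      linarith [h4 ▸ h3]
    have e3 : Real.log ((3:ℝ) ^ (m+1)) = Real.log ((3:ℝ)^m) + Real.log 3 := by
      rw [pow_succ, Real.log_mul (by positivity) (by norm_num)]
    linarith

lemma sum_geom_inv_le (K : ℕ) : ∑ m ∈ Finset.range K, ((3:ℝ) ^ m)⁻¹ ≤ 2 := by
  have h : ∀ m, ((3:ℝ) ^ m)⁻¹ = (1/3 : ℝ) ^ m := by
    intro m; rw [one_div, inv_pow]
  simp_rw [h]
  have := geom_sum_eq (by norm_num : (1/3:ℝ) ≠ 1) K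
  rw [this]
  have hp : (0:ℝ) ≤ (1/3:ℝ)^K := by positivity
  have e : ((1/3:ℝ)^K - 1)/(1/3 - 1) = (1 - (1/3:ℝ)^K) * (3/2) := by ring
  rw [e]
  linarith

open Finset

noncomputable def Hr (N : ℕ) : ℝ := ∑ n ∈ Finset.range N, w n

noncomputable def Bf (N m : ℕ) : ℝ :=
  ∑ n ∈ (Finset.range N).filter (fun n => Nat.log 3 (n + 1) = m), w n

lemma filter_log_eq (N m : ℕ) :
    (Finset.range N).filter (fun n => Nat.log 3 (n + 1) = m)
      = Finset.Ico (3 ^ m - 1) (min N (3 ^ (m + 1) - 1)) := by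
  ext n
  simp only [mem_filter, mem_range, mem_Ico, lt_min_iff]
  have h1 : (1:ℕ) ≤ 3 ^ m := Nat.one_le_pow _ _ (by norm_num)
  constructor
  · rintro ⟨hn, hlog⟩
    have ha : 3 ^ m ≤ n + 1 := hlog ▸ Nat.pow_log_le_self 3 (by omega)
    have hb : n + 1 < 3 ^ (m + 1) := hlog ▸ Nat.lt_pow_succ_log_self (by norm_num) _
    omega
  · rintro ⟨ha, hn, hb⟩
    exact ⟨hn, log_uniq (by omega) (by omega)⟩

lemma maps_to_log {N : ℕ} (n : ℕ) (hn : n ∈ Finset.range N) :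
    Nat.log 3 (n + 1) ∈ Finset.range (Nat.log 3 N + 1) := by
  rw [mem_range, Nat.lt_succ_iff]
  exact Nat.log_mono_right (by simpa [Nat.succ_le_iff] using hn)

lemma Hr_eq_sum_B (N : ℕ) : Hr N = ∑ m ∈ Finset.range (Nat.log 3 N + 1), Bf N m := by
  unfold Hr Bf
  exact (Finset.sum_fiberwise_of_maps_to maps_to_log w).symm

lemma Bf_full {N m : ℕ} (hm : m < Nat.log 3 N) (hN : 1 ≤ N) :
    Bf N m = ∑ n ∈ Finset.Ico (3 ^ m - 1) (3 ^ (m + 1) - 1), w n := by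
  unfold Bf
  rw [filter_log_eq]
  have h3 : 3 ^ (m + 1) ≤ N := le_trans
    (Nat.pow_le_pow_right (by norm_num) (by omega)) (Nat.pow_log_le_self 3 (by omega))
  rw [min_eq_right (le_trans (Nat.sub_le _ 1) h3)]

lemma Bf_nonneg (N m : ℕ) : 0 ≤ Bf N m :=
  Finset.sum_nonneg fun n _ => (w_pos n).le

lemma Bf_le (N m : ℕ) : Bf N m ≤ Real.log 3 + 3 * ((3:ℝ) ^ m)⁻¹ := by
  refine le_trans ?_ (blocksum_ub m)
  unfold Bf
  rw [filter_log_eq]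
  exact Finset.sum_le_sum_of_subset_of_nonneg
    (Finset.Ico_subset_Ico le_rfl (min_le_right _ _)) (fun n _ _ => (w_pos n).le)

lemma cnt_formula (r M : ℕ) (hr : r < 3) :
    ((Finset.range M).filter (fun m => m % 3 = r)).card
      = M / 3 + (if r < M % 3 then 1 else 0) := by
  induction M with
  | zero => simp
  | succ M ih =>
    rw [Finset.range_add_one, Finset.filter_insert]
    by_cases h : M % 3 = r
    · rw [if_pos h, Finset.card_insert_of_notMem (fun hmem => by
        simp only [mem_filter, mem_range] at hmem; omega), ih]
      split_ifs <;> omega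
    · rw [if_neg h, ih]
      split_ifs <;> omega

noncomputable def Wsel (r N : ℕ) : ℝ :=
  ∑ n ∈ (Finset.range N).filter (fun n => Nat.log 3 (n + 1) % 3 = r), w n

lemma Wsel_eq (r N : ℕ) :
    Wsel r N = ∑ m ∈ Finset.range (Nat.log 3 N + 1),
      (if m % 3 = r then Bf N m else 0) := by
  unfold Wsel
  rw [Finset.sum_filter]
  rw [← Finset.sum_fiberwise_of_maps_to (maps_to_log (N := N))
    (fun n => if Nat.log 3 (n + 1) % 3 = r then w n else 0)]
  refine Finset.sum_congr rfl fun m _ => ?_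
  by_cases hm : m % 3 = r
  · rw [if_pos hm]
    unfold Bf
    refine Finset.sum_congr rfl fun n hn => ?_
    rw [(Finset.mem_filter.1 hn).2, if_pos hm]
  · rw [if_neg hm]
    refine Finset.sum_eq_zero fun n hn => ?_
    rw [(Finset.mem_filter.1 hn).2, if_neg hm]

lemma abs_sum_c_le (r M : ℕ) (hr : r < 3) :
    |∑ m ∈ Finset.range M, ((if m % 3 = r then (3:ℝ) else 0) - 1)| ≤ 3 := by
  have hsum : ∑ m ∈ Finset.range M, ((if m % 3 = r then (3:ℝ) else 0) - 1)
      = 3 * (((Finset.range M).filter (fun m => m % 3 = r)).card : ℝ) - M := by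
    rw [Finset.sum_sub_distrib, Finset.sum_const, ← Finset.sum_filter,
      Finset.sum_const]
    simp [nsmul_eq_mul]
    ring
  rw [hsum]
  have hc := cnt_formula r M hr
  set c := ((Finset.range M).filter (fun m => m % 3 = r)).card with hcdef
  have h1 : 3 * c ≤ M + 3 := by rw [hc]; split_ifs <;> omega
  have h2 : M ≤ 3 * c + 3 := by rw [hc]; split_ifs <;> omega
  rw [abs_le]
  constructor
  · have : (M:ℝ) ≤ 3 * c + 3 := by exact_mod_cast h2
    linarith
  · have : (3:ℝ) * c ≤ M + 3 := by exact_mod_cast h1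
    linarith

lemma key_est (r N : ℕ) (hr : r < 3) (hN : 1 ≤ N) :
    |3 * Wsel r N - Hr N| ≤ 30 := by
  set M := Nat.log 3 N with hM
  have hE : 3 * Wsel r N - Hr N
      = ∑ m ∈ Finset.range (M + 1), (((if m % 3 = r then (3:ℝ) else 0) - 1) * Bf N m) := by
    rw [Wsel_eq, Hr_eq_sum_B, Finset.mul_sum, ← Finset.sum_sub_distrib]
    refine Finset.sum_congr rfl fun m _ => ?_
    split_ifs <;> ring
  rw [hE, Finset.sum_range_succ]
  set c : ℕ → ℝ := fun m => (if m % 3 = r then (3:ℝ) else 0) - 1 with hc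
  have hcabs : ∀ m, |c m| ≤ 2 := by
    intro m
    show |(if m % 3 = r then (3:ℝ) else 0) - 1| ≤ 2
    split_ifs <;> norm_num
  -- main-part estimate
  have hmain : |∑ m ∈ Finset.range M, c m * Bf N m| ≤ 12 + 3 * Real.log 3 := by
    have hsplit : ∑ m ∈ Finset.range M, c m * Bf N m
        = (∑ m ∈ Finset.range M, c m * (Bf N m - Real.log 3))
          + (∑ m ∈ Finset.range M, c m) * Real.log 3 := by
      rw [Finset.sum_mul, ← Finset.sum_add_distrib]
      refine Finset.sum_congr rfl fun m _ => ?_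
      ring
    rw [hsplit]
    have h1 : |∑ m ∈ Finset.range M, c m * (Bf N m - Real.log 3)| ≤ 12 := by
      refine le_trans (Finset.abs_sum_le_sum_abs _ _) ?_
      have hterm : ∀ m ∈ Finset.range M, |c m * (Bf N m - Real.log 3)|
          ≤ 6 * ((3:ℝ) ^ m)⁻¹ := by
        intro m hm
        rw [abs_mul]
        have hfull := Bf_full (hM ▸ Finset.mem_range.1 hm) hN
        have hlb : Real.log 3 ≤ Bf N m := hfull ▸ blocksum_lb m
        have hub : Bf N m ≤ Real.log 3 + 3 * ((3:ℝ) ^ m)⁻¹ := Bf_le N m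
        have habs2 : |Bf N m - Real.log 3| ≤ 3 * ((3:ℝ)^m)⁻¹ := by
          rw [abs_le]; constructor <;> [linarith; linarith]
        calc |c m| * |Bf N m - Real.log 3| ≤ 2 * (3 * ((3:ℝ)^m)⁻¹) :=
              mul_le_mul (hcabs m) habs2 (abs_nonneg _) (by norm_num)
          _ = 6 * ((3:ℝ)^m)⁻¹ := by ring
      refine le_trans (Finset.sum_le_sum hterm) ?_
      rw [← Finset.mul_sum]
      have := sum_geom_inv_le M
      linarith
    have h2 : |(∑ m ∈ Finset.range M, c m) * Real.log 3| ≤ 3 * Real.log 3 := by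
      rw [abs_mul, abs_of_nonneg log3_nonneg]
      exact mul_le_mul_of_nonneg_right (abs_sum_c_le r M hr) log3_nonneg
    calc |_ + _| ≤ _ := abs_add_le _ _
      _ ≤ 12 + 3 * Real.log 3 := by linarith
  -- last (possibly partial) block
  have hlast : |c M * Bf N M| ≤ 2 * Real.log 3 + 6 := by
    rw [abs_mul]
    have h0 : |Bf N M| ≤ Real.log 3 + 3 := by
      rw [abs_of_nonneg (Bf_nonneg N M)]
      refine le_trans (Bf_le N M) ?_
      have : ((3:ℝ) ^ M)⁻¹ ≤ 1 := by
        rw [inv_le_one_iff₀]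
        right
        exact one_le_pow₀ (by norm_num : (1:ℝ) ≤ 3)
      linarith
    calc |c M| * |Bf N M| ≤ 2 * (Real.log 3 + 3) :=
          mul_le_mul (hcabs M) h0 (abs_nonneg _) (by norm_num)
      _ = 2 * Real.log 3 + 6 := by ring
  calc |_ + _| ≤ _ := abs_add_le _ _
    _ ≤ (12 + 3 * Real.log 3) + (2 * Real.log 3 + 6) := by linarith
    _ ≤ 30 := by linarith [log3_le_two]

lemma Hr_ge_log (N : ℕ) : Real.log (N + 1) ≤ Hr N := by
  have h := sum_w_ge 0 N (Nat.zero_le N)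
  unfold Hr
  rw [Finset.range_eq_Ico]
  simpa using h

lemma Hr_ge_one (N : ℕ) (hN : 1 ≤ N) : 1 ≤ Hr N := by
  have h := Finset.single_le_sum (f := w) (fun i _ => (w_pos i).le)
    (Finset.mem_range.2 hN)
  have : w 0 = 1 := by unfold w; norm_num
  unfold Hr
  linarith

lemma Hr_tendsto : Tendsto (fun N => Hr (N + 1)) atTop atTop := by
  have hb : ∀ N : ℕ, Real.log ((N : ℝ) + 2) ≤ Hr (N + 1) := by
    intro N
    have h := Hr_ge_log (N + 1)
    push_cast at h
    convert h using 2
    ring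
  refine tendsto_atTop_mono hb ?_
  apply Real.tendsto_log_atTop.comp
  exact Filter.tendsto_atTop_add_const_right _ _ tendsto_natCast_atTop_atTop

lemma Wsel_div_tendsto (r : ℕ) (hr : r < 3) :
    Tendsto (fun N => Wsel r (N + 1) / Hr (N + 1)) atTop (𝓝 3⁻¹) := by
  have heq : ∀ N : ℕ, Wsel r (N + 1) / Hr (N + 1)
      = 3⁻¹ + (3 * Wsel r (N + 1) - Hr (N + 1)) / (3 * Hr (N + 1)) := by
    intro N
    have h := Hr_ge_one (N + 1) (by omega)
    field_simp
    ring
  have h0 : Tendsto (fun N => (3 * Wsel r (N + 1) - Hr (N + 1)) / (3 * Hr (N + 1)))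
      atTop (𝓝 0) := by
    have hbound : ∀ N : ℕ, ‖(3 * Wsel r (N + 1) - Hr (N + 1)) / (3 * Hr (N + 1))‖
        ≤ 30 / (3 * Hr (N + 1)) := by
      intro N
      have h1 := Hr_ge_one (N + 1) (by omega)
      rw [Real.norm_eq_abs, abs_div, abs_of_pos (by linarith : (0:ℝ) < 3 * Hr (N+1))]
      exact (div_le_div_iff_of_pos_right (by linarith)).2 (key_est r (N+1) hr (by omega))
    exact squeeze_zero_norm hbound (Tendsto.div_atTop tendsto_const_nhds
      (Tendsto.const_mul_atTop (by norm_num) Hr_tendsto))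
  have hsum : Tendsto (fun N => 3⁻¹ + (3 * Wsel r (N + 1) - Hr (N + 1)) / (3 * Hr (N + 1)))
      atTop (𝓝 (3⁻¹ + 0)) := Tendsto.add tendsto_const_nhds h0
  rw [add_zero] at hsum
  exact hsum.congr (fun N => (heq N).symm)

lemma badsum_le (L N : ℕ) :
    ∑ n ∈ (Finset.range N).filter
      (fun n => ¬ (n + L < 3 ^ (Nat.log 3 (n + 1) + 1))), w n ≤ 2 * L := by
  set s := (Finset.range N).filter
      (fun n => ¬ (n + L < 3 ^ (Nat.log 3 (n + 1) + 1))) with hs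
  have hmaps : ∀ n ∈ s, Nat.log 3 (n + 1) ∈ Finset.range (Nat.log 3 N + 1) :=
    fun n hn => maps_to_log n (Finset.mem_filter.1 hn).1
  rw [← Finset.sum_fiberwise_of_maps_to hmaps w]
  have hinner : ∀ m ∈ Finset.range (Nat.log 3 N + 1),
      ∑ n ∈ s.filter (fun n => Nat.log 3 (n + 1) = m), w n ≤ L * ((3:ℝ) ^ m)⁻¹ := by
    intro m _
    have hsub : s.filter (fun n => Nat.log 3 (n + 1) = m)
        ⊆ Finset.Ico (3 ^ (m + 1) - L) (3 ^ (m + 1) - 1) := by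
      intro n hn
      obtain ⟨hns, hlog⟩ := Finset.mem_filter.1 hn
      obtain ⟨_, hbad⟩ := Finset.mem_filter.1 hns
      rw [hlog] at hbad
      have hlt : n + 1 < 3 ^ (m + 1) := hlog ▸ Nat.lt_pow_succ_log_self (by norm_num) _
      rw [Finset.mem_Ico]
      omega
    have hcard : (s.filter (fun n => Nat.log 3 (n + 1) = m)).card ≤ L := by
      refine le_trans (Finset.card_le_card hsub) ?_
      rw [Nat.card_Ico]
      omega
    have hterm : ∀ n ∈ s.filter (fun n => Nat.log 3 (n + 1) = m),
        w n ≤ ((3:ℝ) ^ m)⁻¹ := by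
      intro n hn
      have hlog := (Finset.mem_filter.1 hn).2
      have hge : 3 ^ m ≤ n + 1 := hlog ▸ Nat.pow_log_le_self 3 (by omega)
      unfold w
      have : ((3:ℝ) ^ m) ≤ (n : ℝ) + 1 := by exact_mod_cast hge
      exact inv_anti₀ (by positivity) this
    calc ∑ n ∈ s.filter (fun n => Nat.log 3 (n + 1) = m), w n
        ≤ (s.filter (fun n => Nat.log 3 (n + 1) = m)).card • ((3:ℝ) ^ m)⁻¹ :=
          Finset.sum_le_card_nsmul _ _ _ hterm
      _ = ((s.filter (fun n => Nat.log 3 (n + 1) = m)).card : ℝ) * ((3:ℝ) ^ m)⁻¹ := by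
          rw [nsmul_eq_mul]
      _ ≤ L * ((3:ℝ) ^ m)⁻¹ := by
          apply mul_le_mul_of_nonneg_right _ (by positivity)
          exact_mod_cast hcard
  calc ∑ m ∈ Finset.range (Nat.log 3 N + 1),
        ∑ n ∈ s.filter (fun n => Nat.log 3 (n + 1) = m), w n
      ≤ ∑ m ∈ Finset.range (Nat.log 3 N + 1), (L : ℝ) * ((3:ℝ) ^ m)⁻¹ :=
        Finset.sum_le_sum hinner
    _ = L * ∑ m ∈ Finset.range (Nat.log 3 N + 1), ((3:ℝ) ^ m)⁻¹ := by
        rw [Finset.mul_sum]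
    _ ≤ L * 2 := mul_le_mul_of_nonneg_left (sum_geom_inv_le _) (by positivity)
    _ = 2 * L := by ring

lemma shift3_iterate (y : ℕ → Fin 3) (n j : ℕ) : shift3^[n] y j = y (j + n) := by
  induction n generalizing y with
  | zero => rfl
  | succ n ih =>
    rw [Function.iterate_succ_apply, ih]
    show y (j + n + 1) = y (j + (n + 1))
    ring_nf

lemma xTri_const_of_good {n L j : ℕ} (hgood : n + L < 3 ^ (Nat.log 3 (n + 1) + 1))
    (hj : j < L) : xTri (n + j) = xTri n := by
  rw [xTri_eq, xTri_eq]
  unfold dig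
  have h1 : Nat.log 3 (n + j + 1) = Nat.log 3 (n + 1) := by
    apply log_uniq
    · exact le_trans (Nat.pow_log_le_self 3 (by omega)) (by omega)
    · omega
  simp [h1]




open scoped BoundedContinuousFunction in
abbrev X3 := ℕ → Fin 3
open BoundedContinuousFunction

lemma harmonicSum_toReal (N : ℕ) : (harmonicSum N).toReal = Hr (N + 1) := by
  unfold harmonicSum Hr
  rw [ENNReal.toReal_sum (fun n _ => by
    simp only [ne_eq, ENNReal.inv_eq_top]
    exact fun h => by simp at h)]
  refine Finset.sum_congr rfl fun n _ => ?_
  unfold w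
  rw [ENNReal.toReal_inv, ENNReal.toReal_add (ENNReal.natCast_ne_top n) ENNReal.one_ne_top]
  simp

lemma harmonicSum_ne_zero (N : ℕ) : harmonicSum N ≠ 0 := by
  intro h
  have hle : (((0 : ℕ) : ℝ≥0∞) + 1)⁻¹ ≤ harmonicSum N :=
    Finset.single_le_sum (f := fun n : ℕ => ((n : ℝ≥0∞) + 1)⁻¹)
      (fun i _ => zero_le) (Finset.mem_range.2 (Nat.succ_pos N))
  rw [h] at hle
  simp at hle

lemma harmonicSum_ne_top (N : ℕ) : harmonicSum N ≠ ⊤ := by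
  refine (ENNReal.sum_lt_top.2 fun n _ => ?_).ne
  simp [ENNReal.inv_lt_top]

lemma integral_logEmp (f : X3 →ᵇ ℝ) (N : ℕ) :
    ∫ y, f y ∂((logEmp shift3 xTri N : ProbabilityMeasure X3) : Measure X3)
      = (Hr (N + 1))⁻¹ * ∑ n ∈ Finset.range (N + 1), w n * f (shift3^[n] xTri) := by
  have hcoe : ((logEmp shift3 xTri N : ProbabilityMeasure X3) : Measure X3)
      = (harmonicSum N)⁻¹ • ∑ n ∈ Finset.range (N + 1),
        (((n : ℝ≥0∞) + 1)⁻¹ • Measure.dirac (shift3^[n] xTri)) := rfl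
  rw [hcoe, integral_smul_measure]
  have hsum := MeasureTheory.integral_finset_sum_measure
    (μ := fun n : ℕ => ((n : ℝ≥0∞) + 1)⁻¹ • Measure.dirac (shift3^[n] xTri))
    (s := Finset.range (N + 1)) (f := fun y => f y)
    (fun n _ => (f.integrable _).smul_measure (by simp : ((n : ℝ≥0∞) + 1)⁻¹ ≠ ⊤))
  rw [hsum]
  have hterm : ∀ n ∈ Finset.range (N + 1),
      ∫ y, f y ∂((((n : ℝ≥0∞) + 1)⁻¹ • Measure.dirac (shift3^[n] xTri)))
        = w n * f (shift3^[n] xTri) := by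
    intro n _
    rw [integral_smul_measure, integral_dirac, smul_eq_mul, ENNReal.toReal_inv,
      ENNReal.toReal_add (ENNReal.natCast_ne_top n) ENNReal.one_ne_top]
    simp [w]
  rw [Finset.sum_congr rfl hterm, ENNReal.toReal_inv, harmonicSum_toReal, smul_eq_mul]

noncomputable def muBar : Measure X3 :=
  (3 : ℝ≥0∞)⁻¹ • Measure.dirac (fun _ => (0 : Fin 3)) +
    (3 : ℝ≥0∞)⁻¹ • Measure.dirac (fun _ => (1 : Fin 3)) +
    (3 : ℝ≥0∞)⁻¹ • Measure.dirac (fun _ => (2 : Fin 3))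

instance muBar_prob : IsProbabilityMeasure muBar := by
  constructor
  unfold muBar
  simp [Measure.add_apply, Measure.smul_apply]
  have h3 : (3:ℝ≥0∞)⁻¹ + 3⁻¹ + 3⁻¹ = 3 * 3⁻¹ := by ring
  rw [h3, ENNReal.mul_inv_cancel (by norm_num) (by norm_num)]

noncomputable def nuBar : ProbabilityMeasure X3 := ⟨muBar, muBar_prob⟩

lemma integral_nuBar (f : X3 →ᵇ ℝ) :
    ∫ y, f y ∂((nuBar : ProbabilityMeasure X3) : Measure X3)
      = 3⁻¹ * f (fun _ => (0 : Fin 3)) + 3⁻¹ * f (fun _ => (1 : Fin 3))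
        + 3⁻¹ * f (fun _ => (2 : Fin 3)) := by
  have hint : ∀ p : X3, Integrable (fun y => f y) ((3 : ℝ≥0∞)⁻¹ • Measure.dirac p) :=
    fun p => (f.integrable _).smul_measure (by simp)
  have hcoe : ((nuBar : ProbabilityMeasure X3) : Measure X3) = muBar := rfl
  rw [hcoe]
  unfold muBar
  rw [integral_add_measure ((hint _).add_measure (hint _)) (hint _),
    integral_add_measure (hint _) (hint _),
    integral_smul_measure, integral_smul_measure, integral_smul_measure,
    integral_dirac, integral_dirac, integral_dirac]
  simp [smul_eq_mul]

lemma exists_cyl (f : X3 →ᵇ ℝ) (p : X3) {ε : ℝ} (hε : 0 < ε) :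
    ∃ L : ℕ, ∀ y : X3, (∀ j < L, y j = p j) → |f y - f p| < ε := by
  have hc : Filter.Tendsto f (𝓝 p) (𝓝 (f p)) := f.continuous.continuousAt
  have hnb : f ⁻¹' Metric.ball (f p) ε ∈ 𝓝 p := hc (Metric.ball_mem_nhds _ hε)
  rw [nhds_pi, Filter.mem_pi] at hnb
  obtain ⟨I, hIfin, t, ht, hsub⟩ := hnb
  rcases hIfin.bddAbove with ⟨L0, hL0⟩
  refine ⟨L0 + 1, fun y hy => ?_⟩
  have hmem : y ∈ I.pi t := by
    intro j hj
    have hjL : j < L0 + 1 := Nat.lt_succ_of_le (hL0 hj)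
    rw [hy j hjL]
    exact mem_of_mem_nhds (ht j)
  have := hsub hmem
  simpa [Real.dist_eq] using this

lemma J_tendsto (f : X3 →ᵇ ℝ) (r : ℕ) (hr : r < 3) :
    Tendsto (fun N => (Hr (N + 1))⁻¹ *
        ∑ n ∈ (Finset.range (N + 1)).filter (fun n => Nat.log 3 (n + 1) % 3 = r),
          w n * f (shift3^[n] xTri))
      atTop (𝓝 (3⁻¹ * f (fun _ => (⟨r, hr⟩ : Fin 3)))) := by
  set pr : X3 := fun _ => (⟨r, hr⟩ : Fin 3) with hpr
  -- decompose into a vanishing part and the weight part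
  have hdecomp : ∀ N : ℕ, (Hr (N + 1))⁻¹ *
      ∑ n ∈ (Finset.range (N + 1)).filter (fun n => Nat.log 3 (n + 1) % 3 = r),
        w n * f (shift3^[n] xTri)
      = (Hr (N + 1))⁻¹ *
          (∑ n ∈ (Finset.range (N + 1)).filter (fun n => Nat.log 3 (n + 1) % 3 = r),
            w n * (f (shift3^[n] xTri) - f pr))
        + (Wsel r (N + 1) / Hr (N + 1)) * f pr := by
    intro N
    unfold Wsel
    rw [div_eq_mul_inv]
    simp only [mul_sub]
    rw [Finset.sum_sub_distrib, ← Finset.sum_mul]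
    ring
  have h2 : Tendsto (fun N => (Wsel r (N + 1) / Hr (N + 1)) * f pr) atTop
      (𝓝 (3⁻¹ * f pr)) := (Wsel_div_tendsto r hr).mul_const _
  have h1 : Tendsto (fun N => (Hr (N + 1))⁻¹ *
      ∑ n ∈ (Finset.range (N + 1)).filter (fun n => Nat.log 3 (n + 1) % 3 = r),
        w n * (f (shift3^[n] xTri) - f pr)) atTop (𝓝 0) := by
    rw [Metric.tendsto_atTop]
    intro ε hε
    obtain ⟨L, hL⟩ := exists_cyl f pr (half_pos hε)
    have hbound : ∀ N : ℕ, |(Hr (N + 1))⁻¹ *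
        ∑ n ∈ (Finset.range (N + 1)).filter (fun n => Nat.log 3 (n + 1) % 3 = r),
          w n * (f (shift3^[n] xTri) - f pr)|
        ≤ ε / 2 + (4 * L * ‖f‖) / Hr (N + 1) := by
      intro N
      set s := (Finset.range (N + 1)).filter (fun n => Nat.log 3 (n + 1) % 3 = r) with hsdef
      have hH1 : (1:ℝ) ≤ Hr (N + 1) := Hr_ge_one _ (by omega)
      have hHpos : (0:ℝ) < Hr (N + 1) := by linarith
      set F : ℕ → ℝ := fun n => w n * |f (shift3^[n] xTri) - f pr| with hFdef
      have habs : |∑ n ∈ s, w n * (f (shift3^[n] xTri) - f pr)| ≤ ∑ n ∈ s, F n := by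
        refine le_trans (Finset.abs_sum_le_sum_abs _ _) ?_
        refine Finset.sum_le_sum fun n _ => ?_
        rw [abs_mul, abs_of_pos (w_pos n)]
      have hsplit : ∑ n ∈ s, F n
          = ∑ n ∈ s.filter (fun n => n + L < 3 ^ (Nat.log 3 (n+1) + 1)), F n
            + ∑ n ∈ s.filter (fun n => ¬ (n + L < 3 ^ (Nat.log 3 (n+1) + 1))), F n :=
        (Finset.sum_filter_add_sum_filter_not s _ F).symm
      have hgoodsum : ∑ n ∈ s.filter (fun n => n + L < 3 ^ (Nat.log 3 (n+1) + 1)), F n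
          ≤ (ε/2) * Hr (N + 1) := by
        have hterm : ∀ n ∈ s.filter (fun n => n + L < 3 ^ (Nat.log 3 (n+1) + 1)),
            F n ≤ (ε/2) * w n := by
          intro n hn
          obtain ⟨hns, hgood⟩ := Finset.mem_filter.1 hn
          obtain ⟨_, hdig⟩ := Finset.mem_filter.1 hns
          have hy : ∀ j < L, shift3^[n] xTri j = pr j := by
            intro j hj
            rw [shift3_iterate, Nat.add_comm j n, xTri_const_of_good hgood hj, xTri_eq]
            exact Fin.ext hdig
          have hclose := (hL _ hy).le
          calc w n * |f (shift3^[n] xTri) - f pr| ≤ w n * (ε/2) :=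
                mul_le_mul_of_nonneg_left hclose (w_pos n).le
            _ = (ε/2) * w n := mul_comm _ _
        calc ∑ n ∈ s.filter (fun n => n + L < 3 ^ (Nat.log 3 (n+1) + 1)), F n
            ≤ ∑ n ∈ s.filter (fun n => n + L < 3 ^ (Nat.log 3 (n+1) + 1)), (ε/2) * w n :=
              Finset.sum_le_sum hterm
          _ = (ε/2) * ∑ n ∈ s.filter (fun n => n + L < 3 ^ (Nat.log 3 (n+1) + 1)), w n := by
              rw [Finset.mul_sum]
          _ ≤ (ε/2) * Hr (N+1) := by
              refine mul_le_mul_of_nonneg_left ?_ (by linarith)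
              unfold Hr
              refine Finset.sum_le_sum_of_subset_of_nonneg ?_ (fun n _ _ => (w_pos n).le)
              exact (Finset.filter_subset _ _).trans (Finset.filter_subset _ _)
      have hbadsum : ∑ n ∈ s.filter (fun n => ¬ (n + L < 3 ^ (Nat.log 3 (n+1) + 1))), F n
          ≤ 4 * L * ‖f‖ := by
        have hterm : ∀ n ∈ s.filter (fun n => ¬ (n + L < 3 ^ (Nat.log 3 (n+1) + 1))),
            F n ≤ (2 * ‖f‖) * w n := by
          intro n _
          have hd : |f (shift3^[n] xTri) - f pr| ≤ 2 * ‖f‖ := by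
            have h := f.dist_le_two_norm (shift3^[n] xTri) pr
            rwa [Real.dist_eq] at h
          calc w n * |f (shift3^[n] xTri) - f pr| ≤ w n * (2 * ‖f‖) :=
                mul_le_mul_of_nonneg_left hd (w_pos n).le
            _ = (2 * ‖f‖) * w n := mul_comm _ _
        calc ∑ n ∈ s.filter (fun n => ¬ (n + L < 3 ^ (Nat.log 3 (n+1) + 1))), F n
            ≤ ∑ n ∈ s.filter (fun n => ¬ (n + L < 3 ^ (Nat.log 3 (n+1) + 1))), (2 * ‖f‖) * w n :=
              Finset.sum_le_sum hterm
          _ = (2 * ‖f‖) * ∑ n ∈ s.filter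
                (fun n => ¬ (n + L < 3 ^ (Nat.log 3 (n+1) + 1))), w n := by
              rw [Finset.mul_sum]
          _ ≤ (2 * ‖f‖) * (2 * L) := by
              refine mul_le_mul_of_nonneg_left ?_ (by positivity)
              refine le_trans ?_ (badsum_le L (N+1))
              refine Finset.sum_le_sum_of_subset_of_nonneg ?_ (fun n _ _ => (w_pos n).le)
              exact Finset.filter_subset_filter _ (Finset.filter_subset _ _)
          _ = 4 * L * ‖f‖ := by ring
      rw [abs_mul, abs_of_pos (inv_pos.2 hHpos)]
      have hchain : |∑ n ∈ s, w n * (f (shift3^[n] xTri) - f pr)|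
          ≤ (ε/2) * Hr (N + 1) + 4 * L * ‖f‖ := by
        rw [hsplit] at habs
        linarith
      calc (Hr (N + 1))⁻¹ * |∑ n ∈ s, w n * (f (shift3^[n] xTri) - f pr)|
          ≤ (Hr (N + 1))⁻¹ * ((ε/2) * Hr (N + 1) + 4 * L * ‖f‖) :=
            mul_le_mul_of_nonneg_left hchain (by positivity)
        _ = ε / 2 + (4 * L * ‖f‖) / Hr (N + 1) := by
            have hback : (Hr (N+1))⁻¹ * ((ε/2) * Hr (N + 1)) = ε/2 := by
              field_simp
            rw [mul_add, hback, inv_mul_eq_div]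
    have htail : Tendsto (fun N => (4 * L * ‖f‖) / Hr (N + 1)) atTop (𝓝 0) :=
      Tendsto.div_atTop tendsto_const_nhds Hr_tendsto
    have hev : ∀ᶠ N in atTop, (4 * L * ‖f‖) / Hr (N + 1) < ε / 2 :=
      htail.eventually_lt_const (by linarith)
    obtain ⟨N0, hN0⟩ := eventually_atTop.1 hev
    refine ⟨N0, fun n hn => ?_⟩
    rw [Real.dist_eq, sub_zero]
    exact lt_of_le_of_lt (hbound n) (by linarith [hN0 n hn])
  have hfinal := h1.add h2
  rw [zero_add] at hfinal
  exact Tendsto.congr (fun N => (hdecomp N).symm) hfinal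

lemma logEmp_tendsto :
    Tendsto (fun N => logEmp shift3 xTri N) atTop (𝓝 nuBar) := by
  rw [ProbabilityMeasure.tendsto_iff_forall_integral_tendsto]
  intro f
  have hI : ∀ N : ℕ, ∫ y, f y ∂((logEmp shift3 xTri N : ProbabilityMeasure X3) : Measure X3)
      = ∑ r : Fin 3, (Hr (N + 1))⁻¹ *
          ∑ n ∈ (Finset.range (N + 1)).filter (fun n => Nat.log 3 (n + 1) % 3 = (r : ℕ)),
            w n * f (shift3^[n] xTri) := by
    intro N
    rw [integral_logEmp]
    rw [← Finset.sum_fiberwise (Finset.range (N + 1)) (fun n => dig n)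
      (fun n => w n * f (shift3^[n] xTri)), Finset.mul_sum]
    refine Finset.sum_congr rfl fun r _ => ?_
    congr 1
    refine Finset.sum_congr ?_ fun _ _ => rfl
    ext n
    simp only [Finset.mem_filter, Finset.mem_range, and_congr_right_iff]
    intro _
    rw [Fin.ext_iff]
    rfl
  have hlim : Tendsto (fun N => ∑ r : Fin 3, (Hr (N + 1))⁻¹ *
      ∑ n ∈ (Finset.range (N + 1)).filter (fun n => Nat.log 3 (n + 1) % 3 = (r : ℕ)),
        w n * f (shift3^[n] xTri)) atTop
      (𝓝 (∑ r : Fin 3, 3⁻¹ * f (fun _ => r))) := by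
    refine tendsto_finset_sum _ fun r _ => ?_
    have := J_tendsto f r.val r.isLt
    simpa [Fin.eta] using this
  rw [show (∫ y, f y ∂((nuBar : ProbabilityMeasure X3) : Measure X3))
      = ∑ r : Fin 3, 3⁻¹ * f (fun _ => r) by
    rw [integral_nuBar, Fin.sum_univ_three]]
  exact Tendsto.congr (fun N => (hI N).symm) hlim

lemma logLimitSet_eq :
    logLimitSet shift3 xTri = {ν : ProbabilityMeasure X3 | ν.toMeasure = muBar} := by
  ext ν
  constructor
  · rintro ⟨φ, hφ, hlim⟩
    have h2 : Tendsto ((fun N => logEmp shift3 xTri N) ∘ φ) atTop (𝓝 nuBar) :=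
      logEmp_tendsto.comp hφ.tendsto_atTop
    have hequ : ν = nuBar := tendsto_nhds_unique hlim h2
    rw [hequ]
    rfl
  · intro hν
    have hequ : ν = nuBar := MeasureTheory.ProbabilityMeasure.toMeasure_injective hν
    rw [hequ]
    exact ⟨id, strictMono_id, by simpa using logEmp_tendsto⟩

def Ac (r : Fin 3) : Set X3 := (fun y => y 0) ⁻¹' {r}

lemma Ac_meas (r : Fin 3) : MeasurableSet (Ac r) :=
  (measurable_pi_apply 0) (MeasurableSet.singleton r)

lemma Ac_clopen (r : Fin 3) : IsClopen (Ac r) :=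
  (isClopen_discrete {r}).preimage (continuous_apply 0)

lemma muBar_Ac (r : Fin 3) : muBar (Ac r) = 3⁻¹ := by
  unfold muBar
  rw [Measure.add_apply, Measure.add_apply, Measure.smul_apply, Measure.smul_apply,
    Measure.smul_apply, Measure.dirac_apply' _ (Ac_meas r), Measure.dirac_apply' _ (Ac_meas r),
    Measure.dirac_apply' _ (Ac_meas r)]
  fin_cases r <;>
    simp [Ac, Set.indicator_apply, Set.mem_preimage]

lemma cesaro_apply (N : ℕ) (r : Fin 3) :
    ((cesaroEmp shift3 xTri N : ProbabilityMeasure X3) : Measure X3) (Ac r)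
      = ((N : ℝ≥0∞) + 1)⁻¹ *
        (((Finset.range (N + 1)).filter (fun n => dig n = r)).card : ℝ≥0∞) := by
  have hcoe : ((cesaroEmp shift3 xTri N : ProbabilityMeasure X3) : Measure X3)
      = ((N + 1 : ℝ≥0∞))⁻¹ • ∑ n ∈ Finset.range (N + 1),
          Measure.dirac (shift3^[n] xTri) := rfl
  rw [hcoe, Measure.smul_apply, Measure.finset_sum_apply]
  have hterm : ∀ n ∈ Finset.range (N + 1),
      Measure.dirac (shift3^[n] xTri) (Ac r) = if dig n = r then 1 else 0 := by
    intro n _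
    rw [Measure.dirac_apply' _ (Ac_meas r)]
    have hmem : shift3^[n] xTri ∈ Ac r ↔ dig n = r := by
      unfold Ac
      rw [Set.mem_preimage, Set.mem_singleton_iff, shift3_iterate, Nat.zero_add, xTri_eq]
    by_cases h : dig n = r
    · rw [if_pos h, Set.indicator_of_mem (hmem.2 h)]
      rfl
    · rw [if_neg h, Set.indicator_of_notMem (fun hc => h (hmem.1 hc))]
  rw [Finset.sum_congr rfl hterm, Finset.sum_boole, smul_eq_mul]

lemma fiber_card_le (s : Finset ℕ) (m : ℕ) :
    ((s.filter (fun n => Nat.log 3 (n + 1) = m))).card ≤ 2 * 3 ^ m := by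
  have hsub : s.filter (fun n => Nat.log 3 (n + 1) = m)
      ⊆ Finset.Ico (3 ^ m - 1) (3 ^ (m + 1) - 1) := by
    intro n hn
    have hlog := (Finset.mem_filter.1 hn).2
    have ha : 3 ^ m ≤ n + 1 := hlog ▸ Nat.pow_log_le_self 3 (by omega)
    have hb : n + 1 < 3 ^ (m + 1) := hlog ▸ Nat.lt_pow_succ_log_self (by norm_num) _
    rw [Finset.mem_Ico]
    omega
  refine le_trans (Finset.card_le_card hsub) ?_
  rw [Nat.card_Ico]
  have h3 : 3 ^ (m + 1) = 3 * 3 ^ m := by ring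
  omega

lemma geom_bound : ∀ M : ℕ,
    26 * ∑ m ∈ (Finset.range (M - 1)).filter (fun m => m % 3 = (M + 1) % 3), 3 ^ m
      ≤ 3 ^ (M + 1) := by
  intro M
  induction M using Nat.strong_induction_on with
  | _ M ih =>
    match M with
    | 0 => simp
    | 1 => simp
    | 2 => decide
    | (M + 3) =>
      have hset : (Finset.range (M + 3 - 1)).filter (fun m => m % 3 = (M + 3 + 1) % 3)
          = insert (M + 1) ((Finset.range (M - 1)).filter (fun m => m % 3 = (M + 1) % 3)) := by
        ext m
        simp only [Finset.mem_filter, Finset.mem_range, Finset.mem_insert]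
        omega
      rw [hset, Finset.sum_insert (by
        simp only [Finset.mem_filter, Finset.mem_range]
        omega)]
      have h1 := ih M (by omega)
      have h2 : 3 ^ (M + 3 + 1) = 27 * 3 ^ (M + 1) := by ring
      omega

noncomputable def tOf (N : ℕ) : Fin 3 := ⟨(Nat.log 3 (N + 1) + 1) % 3, by omega⟩

lemma count_small (N : ℕ) :
    13 * (((Finset.range (N + 1)).filter (fun n => dig n = tOf N)).card) ≤ 3 * (N + 1) := by
  set M := Nat.log 3 (N + 1) with hM
  set s := (Finset.range (N + 1)).filter (fun n => dig n = tOf N) with hs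
  have hcard : s.card
      = ∑ m ∈ Finset.range (M + 1), (s.filter (fun n => Nat.log 3 (n + 1) = m)).card :=
    Finset.card_eq_sum_card_fiberwise (fun n hn => maps_to_log n (Finset.mem_filter.1 hn).1)
  have hfib : ∀ m ∈ Finset.range (M + 1), (s.filter (fun n => Nat.log 3 (n + 1) = m)).card
      ≤ if m % 3 = (M + 1) % 3 then 2 * 3 ^ m else 0 := by
    intro m _
    by_cases h : m % 3 = (M + 1) % 3
    · rw [if_pos h]
      exact fiber_card_le s m
    · rw [if_neg h]
      have hempty : s.filter (fun n => Nat.log 3 (n + 1) = m) = ∅ := by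
        rw [Finset.filter_eq_empty_iff]
        intro n hn hlog
        apply h
        have hdig := (Finset.mem_filter.1 hn).2
        have hval : Nat.log 3 (n + 1) % 3 = (Nat.log 3 (N + 1) + 1) % 3 :=
          congrArg Fin.val hdig
        rw [hlog] at hval
        rw [hval, hM]
      simp [hempty]
  have hsum : s.card ≤ ∑ m ∈ Finset.range (M + 1),
      (if m % 3 = (M + 1) % 3 then 2 * 3 ^ m else 0) := hcard ▸ Finset.sum_le_sum hfib
  have hsum2 : ∑ m ∈ Finset.range (M + 1), (if m % 3 = (M + 1) % 3 then 2 * 3 ^ m else 0)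
      = 2 * ∑ m ∈ (Finset.range (M - 1)).filter (fun m => m % 3 = (M + 1) % 3), 3 ^ m := by
    rw [← Finset.sum_filter]
    have hseteq : (Finset.range (M + 1)).filter (fun m => m % 3 = (M + 1) % 3)
        = (Finset.range (M - 1)).filter (fun m => m % 3 = (M + 1) % 3) := by
      ext m
      simp only [Finset.mem_filter, Finset.mem_range]
      omega
    rw [hseteq, Finset.mul_sum]
  have hgeom := geom_bound M
  have hpow : 3 ^ (M + 1) ≤ 3 * (N + 1) := by
    have ha : 3 ^ M ≤ N + 1 := Nat.pow_log_le_self 3 (by omega)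
    have hb : 3 ^ (M + 1) = 3 * 3 ^ M := by ring
    omega
  omega

lemma nuBar_not_cesaro : nuBar ∉ cesaroLimitSet shift3 xTri := by
  rintro ⟨φ, hφ, hlim⟩
  have hconv : ∀ r : Fin 3,
      Tendsto (fun j => ((cesaroEmp shift3 xTri (φ j) : ProbabilityMeasure X3) : Measure X3) (Ac r))
        atTop (𝓝 ((nuBar : Measure X3) (Ac r))) := by
    intro r
    have h_closeds : ∀ F, IsClosed F →
        (atTop.limsup fun j => ((cesaroEmp shift3 xTri (φ j) : ProbabilityMeasure X3) :
          Measure X3) F) ≤ (nuBar : Measure X3) F :=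
      fun F hF => ProbabilityMeasure.limsup_measure_closed_le_of_tendsto hlim hF
    have h_opens : ∀ G, IsOpen G → (nuBar : Measure X3) G ≤
        atTop.liminf fun j => ((cesaroEmp shift3 xTri (φ j) : ProbabilityMeasure X3) :
          Measure X3) G :=
      fun G hG => le_measure_liminf_of_limsup_measure_compl_le hG.measurableSet
        (h_closeds _ (isClosed_compl_iff.2 hG))
    refine tendsto_measure_of_null_frontier h_opens ?_
    rw [isClopen_iff_frontier_eq_empty.1 (Ac_clopen r)]
    simp
  obtain ⟨r, hr⟩ : ∃ r : Fin 3, ∃ᶠ j in atTop, tOf (φ j) = r := by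
    by_contra h
    push_neg at h
    have h' : ∀ r : Fin 3, ∀ᶠ j in atTop, ¬ tOf (φ j) = r := by
      intro r
      rw [← Filter.not_frequently]
      exact Filter.not_frequently.2 (h r)
    obtain ⟨j, h0, h1, h2⟩ := ((h' 0).and ((h' 1).and (h' 2))).exists
    have h3 : ∀ t : Fin 3, t = 0 ∨ t = 1 ∨ t = 2 := by decide
    rcases h3 (tOf (φ j)) with h | h | h
    exacts [h0 h, h1 h, h2 h]
  have hfreq : ∃ᶠ j in atTop,
      ((cesaroEmp shift3 xTri (φ j) : ProbabilityMeasure X3) : Measure X3) (Ac r)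
        ∈ Set.Iic ((3 : ℝ≥0∞) / 13) := by
    refine hr.mono fun j hj => ?_
    rw [Set.mem_Iic, cesaro_apply, ← hj]
    set N := φ j with hN
    have hc := count_small N
    have hA0 : ((N : ℝ≥0∞) + 1) ≠ 0 := by simp
    have hAt : ((N : ℝ≥0∞) + 1) ≠ ⊤ := by simp
    rw [ENNReal.le_div_iff_mul_le (Or.inl (by norm_num)) (Or.inl (by norm_num))]
    have hcast : (13 : ℝ≥0∞) * (((Finset.range (N + 1)).filter
        (fun n => dig n = tOf N)).card : ℝ≥0∞) ≤ 3 * ((N : ℝ≥0∞) + 1) := by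
      exact_mod_cast hc
    calc ((N : ℝ≥0∞) + 1)⁻¹ * _ * 13
        = (13 * (((Finset.range (N + 1)).filter (fun n => dig n = tOf N)).card : ℝ≥0∞)) * ((N : ℝ≥0∞) + 1)⁻¹ := by ring
      _ ≤ (3 * ((N : ℝ≥0∞) + 1)) * ((N : ℝ≥0∞) + 1)⁻¹ := mul_le_mul_left hcast _
      _ = 3 * (((N : ℝ≥0∞) + 1) * ((N : ℝ≥0∞) + 1)⁻¹) := by ring
      _ = 3 := by rw [ENNReal.mul_inv_cancel hA0 hAt, mul_one]
  have hmem : (nuBar : Measure X3) (Ac r) ∈ Set.Iic ((3 : ℝ≥0∞) / 13) :=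
    isClosed_Iic.mem_of_frequently_of_tendsto hfreq (hconv r)
  have hval : (nuBar : Measure X3) (Ac r) = 3⁻¹ := muBar_Ac r
  rw [hval, Set.mem_Iic] at hmem
  have h13 : ((3 : ℝ≥0∞) / 13) ≠ ⊤ := by
    rw [ENNReal.div_eq_inv_mul]
    exact ENNReal.mul_ne_top (by simp) (by norm_num)
  have := ENNReal.toReal_mono h13 hmem
  rw [ENNReal.toReal_inv] at this
  rw [ENNReal.toReal_div] at this
  norm_num at this



/-- For the point `x = 00 111111 2^18 0^54 …` of the full shift on
`{0,1,2}`, the harmonic limit set is the single measure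
`(1/3)·δ_0̄ + (1/3)·δ_1̄ + (1/3)·δ_2̄`, and it is disjoint from the Cesàro limit set. -/
theorem limitSets_of_xTri :
    logLimitSet shift3 xTri =
        {ν : ProbabilityMeasure (ℕ → Fin 3) |
          ν.toMeasure = (3 : ℝ≥0∞)⁻¹ • Measure.dirac (fun _ => (0 : Fin 3)) +
            (3 : ℝ≥0∞)⁻¹ • Measure.dirac (fun _ => (1 : Fin 3)) +
            (3 : ℝ≥0∞)⁻¹ • Measure.dirac (fun _ => (2 : Fin 3))} ∧
      cesaroLimitSet shift3 xTri ∩ logLimitSet shift3 xTri = ∅ := by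
  have hset : logLimitSet shift3 xTri = {ν : ProbabilityMeasure X3 | ν.toMeasure = muBar} :=
    logLimitSet_eq
  constructor
  · exact hset
  · rw [Set.eq_empty_iff_forall_notMem]
    rintro ν ⟨hc, hl⟩
    rw [hset] at hl
    have hn : ν = nuBar := MeasureTheory.ProbabilityMeasure.toMeasure_injective hl
    rw [hn] at hc
    exact nuBar_not_cesaro hc
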